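/- Let f: R_{≥0}^n → R_{≥0} be a monotone symmetric norm and let β, b* ∈ R_{≥0}^n. Suppose that for every integer ℓ ∈ [1, n], |β|_{top-ℓ} ≤ γ·|b*|_{top-ℓ} for some γ ≥ 0. Then f(β) ≤ γ·f(b*). -/

import Mathlib

/-!
Sort `β` and `b*` decreasingly; the hypothesis then says that every prefix sum of the sorted `β`
is at most the corresponding prefix sum of `γ` times the sorted `b*` (weak majorization). If the
domination already holds coordinatewise, monotonicity concludes. Otherwise let `k` be the first
coordinate where `β` is too large; prefix domination up to `k` yields an earlier `j` with slack,
and moving mass from `j` to `k` in the dominating vector (a Robin Hood transfer) keeps prefix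
domination and matches one more coordinate. Such a transfer never increases a symmetric convex
`f`, since it is a convex combination of the vector and its copy with `j` and `k` swapped.
Induction on the number of mismatched coordinates finishes the proof.
-/

open Finset

/-- The top-ℓ norm of `x ∈ ℝ_{≥0}^n`: the maximum of `∑ α_j x_j` over `α ∈ [0,1]^n`
with `∑ α_j = ℓ`; for integer `ℓ ∈ [1,n]` this is the sum of the `ℓ` largest coordinates. -/
noncomputable def topNorm (n : ℕ) (x : Fin n → ℝ) (ℓ : ℝ) : ℝ :=
  sSup {s : ℝ | ∃ α : Fin n → ℝ, (∀ j, 0 ≤ α j ∧ α j ≤ 1) ∧ (∑ j, α j) = ℓ ∧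
    s = ∑ j, α j * x j}

variable {ι : Type*}

structure IsMonotoneSymmetricSeminorm (f : (ι → ℝ) → ℝ) : Prop where
  map_smul : ∀ (x : ι → ℝ) (l : ℝ), 0 ≤ x → 0 ≤ l → f (l • x) = l * f x
  map_add_le : ∀ x y : ι → ℝ, 0 ≤ x → 0 ≤ y → f (x + y) ≤ f x + f y
  mono : ∀ x y : ι → ℝ, 0 ≤ x → x ≤ y → f x ≤ f y
  map_comp_perm : ∀ (x : ι → ℝ) (σ : Equiv.Perm ι), 0 ≤ x → f (x ∘ σ) = f x

section Transfer

variable [DecidableEq ι] {y : ι → ℝ} {j k : ι} {t : ℝ}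

def transfer (y : ι → ℝ) (j k : ι) (t : ℝ) : ι → ℝ := y - Pi.single j t + Pi.single k t

lemma transfer_apply_of_ne {i : ι} (hij : i ≠ j) (hik : i ≠ k) : transfer y j k t i = y i := by
  simp [transfer, hij, hik]

lemma transfer_apply_left (hjk : j ≠ k) : transfer y j k t j = y j - t := by
  simp [transfer, hjk]

lemma transfer_apply_right (hjk : j ≠ k) : transfer y j k t k = y k + t := by
  simp [transfer, hjk.symm]

lemma sum_transfer (s : Finset ι) :
    ∑ i ∈ s, transfer y j k t i
      = ∑ i ∈ s, y i - (if j ∈ s then t else 0) + (if k ∈ s then t else 0) := by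
  simp [transfer, sum_add_distrib, sum_sub_distrib]

lemma transfer_eq_smul_add_smul_swap (hjk : y k < y j) :
    transfer y j k t
      = (1 - t / (y j - y k)) • y + (t / (y j - y k)) • (y ∘ Equiv.swap j k) := by
  have hjk' : j ≠ k := by rintro rfl; exact lt_irrefl _ hjk
  have hd : y j - y k ≠ 0 := sub_ne_zero.mpr hjk.ne'
  ext i
  rcases eq_or_ne i j with rfl | hij
  · simp only [transfer_apply_left hjk', Pi.add_apply, Pi.smul_apply, Function.comp_apply,
      Equiv.swap_apply_left, smul_eq_mul]
    field_simp
    ring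
  rcases eq_or_ne i k with rfl | hik
  · simp only [transfer_apply_right hjk', Pi.add_apply, Pi.smul_apply, Function.comp_apply,
      Equiv.swap_apply_right, smul_eq_mul]
    field_simp
    ring
  · simp only [transfer_apply_of_ne hij hik, Pi.add_apply, Pi.smul_apply, Function.comp_apply,
      Equiv.swap_apply_of_ne_of_ne hij hik, smul_eq_mul]
    ring

theorem IsMonotoneSymmetricSeminorm.apply_transfer_le {f : (ι → ℝ) → ℝ}
    (hf : IsMonotoneSymmetricSeminorm f) (hy : 0 ≤ y) (ht : 0 ≤ t) (htjk : t ≤ y j - y k) :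
    f (transfer y j k t) ≤ f y := by
  rcases ht.eq_or_lt with rfl | ht
  · simp [transfer]
  set c := t / (y j - y k)
  have hc0 : 0 ≤ c := div_nonneg ht.le (by linarith)
  have hc1 : c ≤ 1 := div_le_one_of_le₀ htjk (by linarith)
  have hswap : 0 ≤ y ∘ Equiv.swap j k := fun i => hy (Equiv.swap j k i)
  rw [transfer_eq_smul_add_smul_swap (by linarith)]
  calc _ ≤ f ((1 - c) • y) + f (c • (y ∘ Equiv.swap j k)) :=
        hf.map_add_le _ _ (smul_nonneg (by linarith) hy) (smul_nonneg hc0 hswap)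
    _ = (1 - c) * f y + c * f y := by
        rw [hf.map_smul _ _ hy (by linarith), hf.map_smul _ _ hswap hc0,
          hf.map_comp_perm _ _ hy]
    _ = f y := by ring

lemma card_ne_transfer_lt [Fintype ι] {x : ι → ℝ} (hj : x j ≠ y j) (hk : x k ≠ y k)
    (hfix : transfer y j k t j = x j ∨ transfer y j k t k = x k) :
    #{i | x i ≠ transfer y j k t i} < #{i | x i ≠ y i} := by
  apply card_lt_card
  rw [ssubset_iff_of_subset]
  · rcases hfix with hfix | hfix
    · exact ⟨j, by simpa using hj, by simp [hfix]⟩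
    · exact ⟨k, by simpa using hk, by simp [hfix]⟩
  · intro i
    simp only [mem_filter, mem_univ, true_and]
    intro hi
    rcases eq_or_ne i j with rfl | hij
    · exact hj
    rcases eq_or_ne i k with rfl | hik
    · exact hk
    rwa [transfer_apply_of_ne hij hik] at hi

end Transfer

section Majorization

variable [LinearOrder ι] {x y : ι → ℝ}

lemma exists_first_deficit [WellFoundedLT ι] (h : ¬x ≤ y) :
    ∃ k, y k < x k ∧ ∀ i < k, x i ≤ y i := by
  obtain ⟨k, hk⟩ := exists_minimal_of_wellFoundedLT (fun k => y k < x k)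
    (by simpa [Pi.le_def] using h)
  exact ⟨k, hk.prop, fun i hi => not_lt.mp (hk.not_prop_of_lt hi)⟩

variable [LocallyFiniteOrderBot ι]

lemma exists_surplus_lt {k : ι} (hxy : ∑ i ∈ Iic k, x i ≤ ∑ i ∈ Iic k, y i) (hk : y k < x k) :
    ∃ j < k, x j < y j := by
  rw [Iic_eq_cons_Iio, sum_cons, sum_cons] at hxy
  obtain ⟨j, hj, hxj⟩ := exists_lt_of_sum_lt (s := Iio k) (f := x) (g := y) (by linarith)
  exact ⟨j, mem_Iio.mp hj, hxj⟩

lemma sum_Iic_le_sum_Iic_transfer (hxy : ∀ l, ∑ i ∈ Iic l, x i ≤ ∑ i ∈ Iic l, y i)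
    {j k : ι} {t : ℝ} (hjk : j < k) (hle : ∀ i < k, x i ≤ y i) (ht : t ≤ y j - x j) (l : ι) :
    ∑ i ∈ Iic l, x i ≤ ∑ i ∈ Iic l, transfer y j k t i := by
  rw [sum_transfer]
  simp only [mem_Iic]
  split_ifs with hjl hkl hkl
  · linarith [hxy l]
  · have hsurplus : y j - x j ≤ ∑ i ∈ Iic l, (y i - x i) :=
      single_le_sum (fun i hi => sub_nonneg.mpr (hle i ((mem_Iic.mp hi).trans_lt
        (not_le.mp hkl)))) (mem_Iic.mpr hjl)
    rw [sum_sub_distrib] at hsurplus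
    linarith
  · exact absurd (hjk.trans_le hkl).le hjl
  · linarith [hxy l]

variable [Fintype ι]

lemma exists_transfer_of_sum_Iic_le (hx : 0 ≤ x) (hy : 0 ≤ y) (hxa : Antitone x)
    (hxy : ∀ l, ∑ i ∈ Iic l, x i ≤ ∑ i ∈ Iic l, y i) (hnle : ¬x ≤ y) :
    ∃ j k t, 0 ≤ t ∧ t ≤ y j - y k ∧ 0 ≤ transfer y j k t ∧
      (∀ l, ∑ i ∈ Iic l, x i ≤ ∑ i ∈ Iic l, transfer y j k t i) ∧
      #{i | x i ≠ transfer y j k t i} < #{i | x i ≠ y i} := by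
  obtain ⟨k, hk, hle⟩ := exists_first_deficit hnle
  obtain ⟨j, hjk, hj⟩ := exists_surplus_lt (hxy k) hk
  have hjk' : j ≠ k := hjk.ne
  -- The largest amount that overshoots neither coordinate; `t ≤ y j - y k` as `x` is antitone.
  set t := min (y j - x j) (x k - y k) with ht
  have htj : t ≤ y j - x j := min_le_left _ _
  have htk : t ≤ x k - y k := min_le_right _ _
  have ht0 : 0 ≤ t := le_min (by linarith) (by linarith)
  have hxkj : x k ≤ x j := hxa hjk.le
  refine ⟨j, k, t, ht0, by linarith, ?_,
    sum_Iic_le_sum_Iic_transfer hxy hjk hle htj, card_ne_transfer_lt hj.ne hk.ne' ?_⟩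
  · intro i
    rw [Pi.zero_apply]
    rcases eq_or_ne i j with rfl | hij
    · rw [transfer_apply_left hjk']
      linarith [show 0 ≤ x i from hx i]
    rcases eq_or_ne i k with rfl | hik
    · rw [transfer_apply_right hjk']
      linarith [show 0 ≤ y i from hy i]
    · rw [transfer_apply_of_ne hij hik]
      exact hy i
  · rw [transfer_apply_left hjk', transfer_apply_right hjk']
    rcases min_choice (y j - x j) (x k - y k) with h | h
    · left; rw [ht, h]; ring
    · right; rw [ht, h]; ring

theorem IsMonotoneSymmetricSeminorm.le_of_sum_Iic_le {f : (ι → ℝ) → ℝ}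
    (hf : IsMonotoneSymmetricSeminorm f) (hx : 0 ≤ x) (hy : 0 ≤ y) (hxa : Antitone x)
    (hxy : ∀ l, ∑ i ∈ Iic l, x i ≤ ∑ i ∈ Iic l, y i) : f x ≤ f y := by
  induction hc : #{i | x i ≠ y i} using Nat.strong_induction_on generalizing y with
  | _ m ih =>
  by_cases hle : x ≤ y
  · exact hf.mono x y hx hle
  obtain ⟨j, k, t, ht, htjk, hy', hxy', hcard⟩ := exists_transfer_of_sum_Iic_le hx hy hxa hxy hle
  calc f x ≤ f (transfer y j k t) := ih _ (hc ▸ hcard) hy' hxy' rfl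
    _ ≤ f y := hf.apply_transfer_le hy ht htjk

end Majorization

lemma exists_perm_antitone_comp {n : ℕ} {α : Type*} [LinearOrder α] (z : Fin n → α) :
    ∃ σ : Equiv.Perm (Fin n), Antitone (z ∘ σ) :=
  ⟨Fin.revPerm.trans (Tuple.sort z), fun _ _ hab => Tuple.monotone_sort z (Fin.rev_le_rev.mpr hab)⟩

section TopNorm

variable {n : ℕ} {z : Fin n → ℝ}

lemma topNorm_eq_sum_of_threshold {s : Finset (Fin n)} {m : ℝ} (hs : ∀ i ∈ s, m ≤ z i)
    (hsc : ∀ i ∉ s, z i ≤ m) : topNorm n z #s = ∑ i ∈ s, z i := by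
  refine IsGreatest.csSup_eq ⟨⟨fun j => if j ∈ s then 1 else 0, fun j => ?_, ?_, ?_⟩, ?_⟩
  · dsimp only
    split_ifs <;> norm_num
  · simp
  · simp [ite_mul, sum_ite_mem]
  rintro _ ⟨α, hα, hsum, rfl⟩
  -- Relative to the threshold `m`, weight moved out of `s` gains at most `m` per unit.
  have hpoint : ∀ j, α j * z j ≤
      (if j ∈ s then z j else 0) + (α j - if j ∈ s then 1 else 0) * m := by
    intro j
    split_ifs with hj
    · nlinarith [hs j hj, hα j]
    · nlinarith [hsc j hj, hα j]
  calc ∑ j, α j * z j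
        ≤ ∑ j, ((if j ∈ s then z j else 0) + (α j - if j ∈ s then 1 else 0) * m) :=
          sum_le_sum fun j _ => hpoint j
    _ = ∑ i ∈ s, z i := by
        simp [sum_add_distrib, ← sum_mul, sum_sub_distrib, sum_ite_mem, hsum]

lemma topNorm_eq_sum_Iic {σ : Equiv.Perm (Fin n)} (hσ : Antitone (z ∘ σ)) (l : Fin n) :
    topNorm n z ((l + 1 : ℕ) : ℝ) = ∑ i ∈ Iic l, z (σ i) := by
  have hcard : #((Iic l).map σ.toEmbedding) = (l : ℕ) + 1 := by simp
  rw [← hcard, topNorm_eq_sum_of_threshold (m := z (σ l)), sum_map]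
  · rfl
  · intro i hi
    obtain ⟨a, ha, rfl⟩ := mem_map.mp hi
    exact hσ (mem_Iic.mp ha)
  · intro i hi
    have hl : l < σ.symm i := by simpa [mem_map_equiv] using hi
    simpa using hσ hl.le

end TopNorm

theorem stmt19_general (n : ℕ) (f : (Fin n → ℝ) → ℝ)
    (hhom : ∀ (x : Fin n → ℝ) (l : ℝ), (∀ j, 0 ≤ x j) → 0 ≤ l → f (l • x) = l * f x)
    (hsub : ∀ x y : Fin n → ℝ, (∀ j, 0 ≤ x j) → (∀ j, 0 ≤ y j) → f (x + y) ≤ f x + f y)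
    (hmono : ∀ x y : Fin n → ℝ, (∀ j, 0 ≤ x j) → (∀ j, x j ≤ y j) → f x ≤ f y)
    (hsym : ∀ (x : Fin n → ℝ) (σ : Equiv.Perm (Fin n)), (∀ j, 0 ≤ x j) →
      f (x ∘ σ) = f x)
    (β bstar : Fin n → ℝ) (hβ : ∀ j, 0 ≤ β j) (hb : ∀ j, 0 ≤ bstar j)
    (γ : ℝ) (hγ : 0 ≤ γ)
    (htop : ∀ ℓ : ℕ, 1 ≤ ℓ → ℓ ≤ n →
      topNorm n β (ℓ : ℝ) ≤ γ * topNorm n bstar (ℓ : ℝ)) :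
    f β ≤ γ * f bstar := by
  have hf : IsMonotoneSymmetricSeminorm f := ⟨hhom, hsub, hmono, hsym⟩
  obtain ⟨σ, hσ⟩ := exists_perm_antitone_comp β
  obtain ⟨τ, hτ⟩ := exists_perm_antitone_comp bstar
  have hprefix (l : Fin n) : ∑ i ∈ Iic l, (β ∘ σ) i ≤ ∑ i ∈ Iic l, (γ • (bstar ∘ τ)) i := by
    have h := htop (l + 1) (by omega) l.isLt
    rw [topNorm_eq_sum_Iic hσ, topNorm_eq_sum_Iic hτ, mul_sum] at h
    simpa using h
  have hbτ : 0 ≤ bstar ∘ τ := fun i => hb (τ i)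
  calc f β = f (β ∘ σ) := (hf.map_comp_perm β σ hβ).symm
    _ ≤ f (γ • (bstar ∘ τ)) :=
        hf.le_of_sum_Iic_le (fun i => hβ (σ i)) (smul_nonneg hγ hbτ) hσ hprefix
    _ = γ * f bstar := by rw [hf.map_smul _ γ hbτ hγ, hf.map_comp_perm bstar τ hb]

/-- For a monotone symmetric norm `f` on `ℝ_{≥0}^n`: if `|β|_{top-ℓ} ≤ γ·|b*|_{top-ℓ}`
for every integer `ℓ ∈ [1,n]`, then `f(β) ≤ γ·f(b*)`. -/
theorem stmt19 (n : ℕ) (f : (Fin n → ℝ) → ℝ)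
    (hne : ∀ x : Fin n → ℝ, (∀ j, 0 ≤ x j) → (f x = 0 ↔ x = 0))
    (hhom : ∀ (x : Fin n → ℝ) (l : ℝ), (∀ j, 0 ≤ x j) → 0 ≤ l → f (l • x) = l * f x)
    (hsub : ∀ x y : Fin n → ℝ, (∀ j, 0 ≤ x j) → (∀ j, 0 ≤ y j) → f (x + y) ≤ f x + f y)
    (hmono : ∀ x y : Fin n → ℝ, (∀ j, 0 ≤ x j) → (∀ j, x j ≤ y j) → f x ≤ f y)
    (hsym : ∀ (x : Fin n → ℝ) (σ : Equiv.Perm (Fin n)), (∀ j, 0 ≤ x j) →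
      f (x ∘ σ) = f x)
    (β bstar : Fin n → ℝ) (hβ : ∀ j, 0 ≤ β j) (hb : ∀ j, 0 ≤ bstar j)
    (γ : ℝ) (hγ : 0 ≤ γ)
    (htop : ∀ ℓ : ℕ, 1 ≤ ℓ → ℓ ≤ n →
      topNorm n β (ℓ : ℝ) ≤ γ * topNorm n bstar (ℓ : ℝ)) :
    f β ≤ γ * f bstar :=
  stmt19_general n f hhom hsub hmono hsym β bstar hβ hb γ hγ htop
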